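/- Let S be a finite set with |S| = n ≥ 2. For all nondegenerate hierarchies 𝒜, ℬ over S, the closed-form NNI navigation distance satisfies d_Nav(𝒜,ℬ) ≤ (1/2)(n−1)(n−2), and there exists a pair of nondegenerate hierarchies over S attaining this value; that is, the diameter of the set of nondegenerate hierarchies over S in d_Nav equals (1/2)(n−1)(n−2). -/

import Mathlib

/-!
Every non-singleton cluster `I` of a nondegenerate hierarchy `F` has exactly two children `C₁, C₂`.
A member of `children(I)|_J` that crosses `children(J)|_I` comes from a child of `I` meeting both
sides of a split at `J`, and in a nondegenerate hierarchy `G` a set `C` is split in this way by at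
most `|C| - 1` clusters. As `θ(a + b) = a + b + ab` for `a, b ∈ {0, 1}`, the clusters `J ∈ G`
contribute at most `(|C₁| - 1) + (|C₂| - 1) + (|C₁| - 1)(|C₂| - 1) = |C₁||C₂| - 1` at `I`, and
these amounts add up over the internal clusters of `F` to `(n - 1)(n - 2)/2`.

The bound is attained by the caterpillar of an enumeration `c` of `S` against the caterpillar of
the reversed enumeration: the prefix `{c 0, …, c (j+1)}` and the suffix `{c t, …, c (n-1)}` have
crossing children whenever `t < j`, so `η ≥ 1` on `(n - 1)(n - 2)/2` pairs of clusters.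
-/

open scoped Classical

set_option linter.unusedSectionVars false

namespace TreeDist

variable {α : Type*} [DecidableEq α]

/-- Two finite sets are compatible if they are disjoint or nested. -/
def Compatible (A B : Finset α) : Prop :=
  A ∩ B = ∅ ∨ A ⊆ B ∨ B ⊆ A

/-- A hierarchy over `S`: a laminar family of nonempty subsets of `S`
containing `S` and all singletons. -/
def IsHierarchy (S : Finset α) (F : Finset (Finset α)) : Prop :=
  (∀ A ∈ F, A ⊆ S ∧ A.Nonempty) ∧
  (∀ A ∈ F, ∀ B ∈ F, Compatible A B) ∧
  S ∈ F ∧ ∀ i ∈ S, ({i} : Finset α) ∈ F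

/-- A nondegenerate (binary) hierarchy: a hierarchy with `2|S| - 1` clusters,
equivalently a maximal laminar family. -/
def Nondeg (S : Finset α) (F : Finset (Finset α)) : Prop :=
  IsHierarchy S F ∧ F.card = 2 * S.card - 1

/-- `P` is the parent of `I` in the family `F`: the smallest cluster of `F`
strictly containing `I`. -/
def IsParent (F : Finset (Finset α)) (I P : Finset α) : Prop :=
  P ∈ F ∧ I ⊂ P ∧ ∀ Q ∈ F, I ⊂ Q → P ⊆ Q

/-- `G` is the result of an NNI move on `F` at some grandchild `C`:
`G = (F \ {parent C}) ∪ {grandparent C \ C}`. -/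
def IsNNIMove (F G : Finset (Finset α)) : Prop :=
  ∃ C P GP, C ∈ F ∧ IsParent F C P ∧ IsParent F P GP ∧
    G = insert (GP \ C) (F.erase P)

/-- Restriction of a family of sets to `K`: `{A ∩ K : A ∈ F, A ∩ K ≠ ∅}`. -/
noncomputable def restrictFam (F : Finset (Finset α)) (K : Finset α) : Finset (Finset α) :=
  (F.image (· ∩ K)).filter fun A => A.Nonempty

/-- The cardinality of the smallest common ancestor of `i` and `j` in `F`, i.e. the
minimum cardinality of a cluster of `F` containing both `i` and `j`. -/
noncomputable def caCard (F : Finset (Finset α)) (i j : α) : ℕ :=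
  sInf {n | ∃ A ∈ F, i ∈ A ∧ j ∈ A ∧ A.card = n}

/-- Ultrametric representation `U(F)_{ij} = |ca(i,j)| - 1`. -/
noncomputable def Umat (F : Finset (Finset α)) (i j : α) : ℤ :=
  (caCard F i j : ℤ) - 1

/-- Cluster-cardinality distance `d_CC = (1/2) Σ_{i,j ∈ S} |U(F)_{ij} - U(G)_{ij}|`. -/
noncomputable def dCC (S : Finset α) (F G : Finset (Finset α)) : ℚ :=
  (1 / 2) * ∑ i ∈ S, ∑ j ∈ S, |((Umat F i j : ℚ)) - ((Umat G i j : ℚ))|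

/-- Robinson–Foulds distance: half the size of the symmetric difference of cluster sets. -/
noncomputable def dRF (F G : Finset (Finset α)) : ℚ :=
  (((F \ G) ∪ (G \ F)).card : ℚ) / 2

/-- Crossing dissimilarity: the number of incompatible pairs of clusters. -/
noncomputable def dCM (F G : Finset (Finset α)) : ℕ :=
  ((F ×ˢ G).filter fun p => ¬ Compatible p.1 p.2).card

/-- Depth of a cluster: the number of its strict ancestors in `F`. -/
noncomputable def depth (F : Finset (Finset α)) (I : Finset α) : ℕ :=
  (F.filter fun J => I ⊂ J).card

/-- The children of `I` in `F`: the clusters of `F` whose parent is `I`. -/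
noncomputable def children (F : Finset (Finset α)) (I : Finset α) : Finset (Finset α) :=
  F.filter fun C => IsParent F C I

/-- `η_{F,G}(I,J)`: the number of members of `(children I)|_J` incompatible with
the family `(children J)|_I`. -/
noncomputable def eta (F G : Finset (Finset α)) (I J : Finset α) : ℕ :=
  ((restrictFam (children F I) J).filter
    fun A => ∃ B ∈ restrictFam (children G J) I, ¬ Compatible A B).card

/-- `θ(x) = (x² + x)/2`. -/
def theta (x : ℕ) : ℚ := ((x : ℚ) ^ 2 + x) / 2

/-- Closed-form NNI navigation distance `d_Nav(F,G) = Σ_{I∈F, J∈G} θ(η_{F,G}(I,J))`. -/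
noncomputable def dNav (F G : Finset (Finset α)) : ℚ :=
  ∑ I ∈ F, ∑ J ∈ G, theta (eta F G I J)

lemma Compatible.symm {A B : Finset α} (h : Compatible A B) : Compatible B A := by
  unfold Compatible at *
  rw [Finset.inter_comm]
  tauto

lemma compatible_singleton_left (x : α) (B : Finset α) : Compatible {x} B := by
  by_cases hx : x ∈ B
  · exact Or.inr (Or.inl (Finset.singleton_subset_iff.2 hx))
  · exact Or.inl (Finset.singleton_inter_of_notMem hx)

lemma inter_nonempty_of_not_compatible {A B : Finset α} (h : ¬ Compatible A B) :
    (A ∩ B).Nonempty :=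
  Finset.nonempty_iff_ne_empty.2 fun h' => h (Or.inl h')

lemma not_compatible_of_mem {A B : Finset α} {x y z : α} (hxA : x ∈ A) (hxB : x ∈ B)
    (hyA : y ∈ A) (hyB : y ∉ B) (hzB : z ∈ B) (hzA : z ∉ A) : ¬ Compatible A B := by
  rintro (h | h | h)
  · exact Finset.eq_empty_iff_forall_notMem.1 h x (Finset.mem_inter.2 ⟨hxA, hxB⟩)
  · exact hyB (h hyA)
  · exact hzA (h hzB)

lemma IsParent.unique {F : Finset (Finset α)} {C P P' : Finset α}
    (h : IsParent F C P) (h' : IsParent F C P') : P = P' :=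
  (h.2.2 P' h'.1 h'.2.1).antisymm (h'.2.2 P h.1 h.2.1)

lemma mem_children {F : Finset (Finset α)} {I C : Finset α} :
    C ∈ children F I ↔ C ∈ F ∧ IsParent F C I :=
  Finset.mem_filter

namespace IsHierarchy

variable {S : Finset α} {F : Finset (Finset α)}

lemma subset_or_subset_of_mem (hF : IsHierarchy S F) {A B : Finset α} (hA : A ∈ F) (hB : B ∈ F)
    {x : α} (hxA : x ∈ A) (hxB : x ∈ B) : A ⊆ B ∨ B ⊆ A :=
  (hF.2.1 A hA B hB).resolve_left fun h =>
    Finset.eq_empty_iff_forall_notMem.1 h x (Finset.mem_inter.2 ⟨hxA, hxB⟩)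

lemma exists_parent (hF : IsHierarchy S F) {C : Finset α} (hC : C ∈ F) (hCS : C ≠ S) :
    ∃ P, IsParent F C P := by
  have hS : S ∈ F.filter (C ⊂ ·) :=
    Finset.mem_filter.2 ⟨hF.2.2.1, Finset.ssubset_iff_subset_ne.2 ⟨(hF.1 C hC).1, hCS⟩⟩
  obtain ⟨P, hP, hPmin⟩ := (F.filter (C ⊂ ·)).exists_min_image Finset.card ⟨S, hS⟩
  rw [Finset.mem_filter] at hP
  refine ⟨P, hP.1, hP.2, fun Q hQ hCQ => ?_⟩
  obtain ⟨x, hx⟩ := (hF.1 C hC).2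
  rcases hF.subset_or_subset_of_mem hP.1 hQ (hP.2.subset hx) (hCQ.subset hx) with h | h
  · exact h
  · rw [Finset.eq_of_subset_of_card_le h (hPmin Q (Finset.mem_filter.2 ⟨hQ, hCQ⟩))]

lemma exists_mem_children (hF : IsHierarchy S F) {I : Finset α} (hI : I ∈ F) {x : α}
    (hx : x ∈ I) (hxI : {x} ≠ I) : ∃ C ∈ children F I, x ∈ C := by
  have hx' : {x} ∈ F.filter (fun Q => x ∈ Q ∧ Q ⊂ I) :=
    Finset.mem_filter.2 ⟨hF.2.2.2 x ((hF.1 I hI).1 hx), Finset.mem_singleton_self x,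
      Finset.ssubset_iff_subset_ne.2 ⟨Finset.singleton_subset_iff.2 hx, hxI⟩⟩
  obtain ⟨C, hC, hCmax⟩ := (F.filter (fun Q => x ∈ Q ∧ Q ⊂ I)).exists_max_image Finset.card ⟨_, hx'⟩
  rw [Finset.mem_filter] at hC
  refine ⟨C, mem_children.2 ⟨hC.1, hI, hC.2.2, fun Q hQ hCQ => ?_⟩, hC.2.1⟩
  have hxQ : x ∈ Q := hCQ.subset hC.2.1
  refine (hF.subset_or_subset_of_mem hQ hI hxQ hx).elim (fun hQI => ?_) id
  obtain rfl | hne := eq_or_ne Q I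
  · exact subset_rfl
  · have := hCmax Q (Finset.mem_filter.2 ⟨hQ, hxQ, Finset.ssubset_iff_subset_ne.2 ⟨hQI, hne⟩⟩)
    exact absurd (Finset.card_lt_card hCQ) (not_lt.2 this)

lemma children_eq_empty_of_card_le_one (hF : IsHierarchy S F) {I : Finset α} (hI : I.card ≤ 1) :
    children F I = ∅ :=
  Finset.eq_empty_iff_forall_notMem.2 fun C hC => by
    have hCI := Finset.card_lt_card (mem_children.1 hC).2.2.1
    have := Finset.card_pos.2 (hF.1 C (mem_children.1 hC).1).2
    omega

lemma sum_card_children (hF : IsHierarchy S F) :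
    ∑ I ∈ F, (children F I).card = F.card - 1 := by
  have hunion : F.biUnion (children F) = F.erase S := by
    ext C
    simp only [Finset.mem_biUnion, Finset.mem_erase, mem_children]
    constructor
    · rintro ⟨I, hI, hC, hCI⟩
      exact ⟨fun h => hCI.2.1.not_subset (h ▸ (hF.1 I hI).1), hC⟩
    · rintro ⟨hCS, hC⟩
      obtain ⟨P, hP⟩ := hF.exists_parent hC hCS
      exact ⟨P, hP.1, hC, hP⟩
  have hdisj : (F : Set (Finset α)).PairwiseDisjoint (children F) :=
    fun I _ I' _ hne => Finset.disjoint_left.2 fun C hC hC' =>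
      hne ((mem_children.1 hC).2.unique (mem_children.1 hC').2)
  rw [← Finset.card_biUnion hdisj, hunion, Finset.card_erase_of_mem hF.2.2.1]

lemma card_filter_card_eq_one (hF : IsHierarchy S F) :
    (F.filter fun A => A.card = 1).card = S.card := by
  have : F.filter (fun A => A.card = 1) = S.image fun i => {i} := by
    ext A
    simp only [Finset.mem_filter, Finset.mem_image, Finset.card_eq_one]
    constructor
    · rintro ⟨hA, x, rfl⟩
      exact ⟨x, (hF.1 _ hA).1 (Finset.mem_singleton_self x), rfl⟩
    · rintro ⟨i, hi, rfl⟩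
      exact ⟨hF.2.2.2 i hi, i, rfl⟩
  rw [this, Finset.card_image_of_injective _ Finset.singleton_injective]

lemma two_le_card_children (hF : IsHierarchy S F) {I : Finset α} (hI : I ∈ F)
    (h2 : 2 ≤ I.card) : 2 ≤ (children F I).card := by
  have hne : ∀ y, {y} ≠ I := fun y h => by rw [← h, Finset.card_singleton] at h2; omega
  obtain ⟨x, hx⟩ := Finset.card_pos.1 (by omega : 0 < I.card)
  obtain ⟨C, hC, hxC⟩ := hF.exists_mem_children hI hx (hne x)
  obtain ⟨z, hzI, hzC⟩ := Finset.exists_of_ssubset (mem_children.1 hC).2.2.1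
  obtain ⟨C', hC', hzC'⟩ := hF.exists_mem_children hI hzI (hne z)
  exact Finset.one_lt_card.2 ⟨C, hC, C', hC', fun h => hzC (h ▸ hzC')⟩

lemma subset_of_mem_children (hF : IsHierarchy S F) {K C I : Finset α}
    (hC : C ∈ children F K) (hI : I ∈ F) (hIK : I ⊂ K) {x : α} (hxI : x ∈ I) (hxC : x ∈ C) :
    I ⊆ C := by
  rw [mem_children] at hC
  refine (hF.subset_or_subset_of_mem hI hC.1 hxI hxC).elim id fun hCI => ?_
  by_contra hIC
  exact hIK.not_subset (hC.2.2.2 I hI (Finset.ssubset_iff_subset_ne.2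
    ⟨hCI, fun h => hIC (h ▸ subset_rfl)⟩))

lemma disjoint_of_mem_children (hF : IsHierarchy S F) {K C C' : Finset α}
    (hC : C ∈ children F K) (hC' : C' ∈ children F K) (hne : C ≠ C') : Disjoint C C' := by
  refine Finset.disjoint_left.2 fun x hx hx' => hne ?_
  have hCF := mem_children.1 hC
  have hCF' := mem_children.1 hC'
  exact (hF.subset_of_mem_children hC' hCF.1 hCF.2.2.1 hx hx').antisymm
    (hF.subset_of_mem_children hC hCF'.1 hCF'.2.2.1 hx' hx)

lemma filter_subset_eq_singleton (hF : IsHierarchy S F) {K : Finset α} (hK : K ∈ F)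
    (h1 : K.card = 1) : F.filter (· ⊆ K) = {K} := by
  ext I
  simp only [Finset.mem_filter, Finset.mem_singleton]
  refine ⟨fun ⟨hI, hIK⟩ => Finset.eq_of_subset_of_card_le hIK ?_, fun h => ⟨h ▸ hK, h ▸ subset_rfl⟩⟩
  have := Finset.card_pos.2 (hF.1 I hI).2
  omega

lemma sum_filter_subset_of_children_eq_pair {M : Type*} [AddCommMonoid M] (hF : IsHierarchy S F)
    {K C₁ C₂ : Finset α} (hK : K ∈ F) (hch : children F K = {C₁, C₂}) (hdisj : Disjoint C₁ C₂)
    (f : Finset α → M) :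
    ∑ I ∈ F.filter (· ⊆ K), f I =
      f K + (∑ I ∈ F.filter (· ⊆ C₁), f I + ∑ I ∈ F.filter (· ⊆ C₂), f I) := by
  have hC₁ : C₁ ∈ children F K := by simp [hch]
  have hC₂ : C₂ ∈ children F K := by simp [hch]
  have hlt₁ := (mem_children.1 hC₁).2.2.1
  have hlt₂ := (mem_children.1 hC₂).2.2.1
  have hsplit : F.filter (· ⊆ K) = insert K (F.filter (· ⊆ C₁) ∪ F.filter (· ⊆ C₂)) := by
    ext I
    simp only [Finset.mem_filter, Finset.mem_insert, Finset.mem_union]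
    constructor
    · rintro ⟨hI, hIK⟩
      refine (eq_or_ne I K).imp id fun hne => ?_
      obtain ⟨x, hx⟩ := (hF.1 I hI).2
      have hIK' : I ⊂ K := Finset.ssubset_iff_subset_ne.2 ⟨hIK, hne⟩
      have hxK : {x} ≠ K := fun h => hIK'.not_subset (h ▸ Finset.singleton_subset_iff.2 hx)
      obtain ⟨C, hC, hxC⟩ := hF.exists_mem_children hK (hIK hx) hxK
      have hIC := hF.subset_of_mem_children hC hI hIK' hx hxC
      rw [hch, Finset.mem_insert, Finset.mem_singleton] at hC
      rcases hC with rfl | rfl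
      exacts [Or.inl ⟨hI, hIC⟩, Or.inr ⟨hI, hIC⟩]
    · rintro (rfl | ⟨hI, hIC⟩ | ⟨hI, hIC⟩)
      exacts [⟨hK, subset_rfl⟩, ⟨hI, hIC.trans hlt₁.subset⟩, ⟨hI, hIC.trans hlt₂.subset⟩]
  have hK₁ : K ∉ F.filter (· ⊆ C₁) ∪ F.filter (· ⊆ C₂) := by
    simp only [Finset.mem_union, Finset.mem_filter, not_or, not_and]
    exact ⟨fun _ h => hlt₁.not_subset h, fun _ h => hlt₂.not_subset h⟩
  have hdisjF : Disjoint (F.filter (· ⊆ C₁)) (F.filter (· ⊆ C₂)) := by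
    refine Finset.disjoint_filter.2 fun I hI h₁ h₂ => ?_
    obtain ⟨x, hx⟩ := (hF.1 I hI).2
    exact Finset.disjoint_left.1 hdisj (h₁ hx) (h₂ hx)
  rw [hsplit, Finset.sum_insert hK₁, Finset.sum_union hdisjF]

lemma union_eq_of_children_eq_pair (hF : IsHierarchy S F) {K C₁ C₂ : Finset α} (hK : K ∈ F)
    (hch : children F K = {C₁, C₂}) : C₁ ∪ C₂ = K := by
  have hC₁ : C₁ ∈ children F K := by simp [hch]
  have hC₂ : C₂ ∈ children F K := by simp [hch]
  refine (Finset.union_subset (mem_children.1 hC₁).2.2.1.subset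
    (mem_children.1 hC₂).2.2.1.subset).antisymm fun x hx => ?_
  have hxK : {x} ≠ K := fun h => by
    have := hF.children_eq_empty_of_card_le_one (I := K) (by rw [← h, Finset.card_singleton])
    simp [this] at hC₁
  obtain ⟨C, hC, hxC⟩ := hF.exists_mem_children hK hx hxK
  rw [hch, Finset.mem_insert, Finset.mem_singleton] at hC
  rcases hC with rfl | rfl
  exacts [Finset.mem_union_left _ hxC, Finset.mem_union_right _ hxC]

end IsHierarchy

def Splits (G : Finset (Finset α)) (J A : Finset α) : Prop :=
  ∃ D ∈ children G J, (A ∩ D).Nonempty ∧ (A ∩ (J \ D)).Nonempty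

lemma Splits.inter_nonempty {G : Finset (Finset α)} {J A D₁ D₂ : Finset α} (h : Splits G J A)
    (hch : children G J = {D₁, D₂}) (hdisj : Disjoint D₁ D₂) (hunion : D₁ ∪ D₂ = J) :
    (A ∩ D₁).Nonempty ∧ (A ∩ D₂).Nonempty := by
  obtain ⟨D, hD, h₁, h₂⟩ := h
  rw [hch, Finset.mem_insert, Finset.mem_singleton] at hD
  rcases hD with rfl | rfl
  · rw [← hunion, Finset.union_sdiff_cancel_left hdisj] at h₂
    exact ⟨h₁, h₂⟩
  · rw [← hunion, Finset.union_sdiff_cancel_right hdisj] at h₂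
    exact ⟨h₂, h₁⟩

namespace Nondeg

variable {S : Finset α} {F : Finset (Finset α)}

lemma card_children (hF : Nondeg S F) {I : Finset α} (hI : I ∈ F) (h2 : 2 ≤ I.card) :
    (children F I).card = 2 := by
  -- `∑ |children| = |F| - 1 = 2 (|S| - 1)`, and each of the `|S| - 1` non-singleton clusters
  -- has at least two children.
  have hH := hF.1
  set L := F.filter fun A => A.card = 1
  have hLF : L ⊆ F := Finset.filter_subset _ _
  have hS := Finset.card_pos.2 (hH.1 S hH.2.2.1).2
  have hcard : (F \ L).card = S.card - 1 := by
    rw [Finset.card_sdiff_of_subset hLF, hH.card_filter_card_eq_one, hF.2]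
    omega
  have hle : ∀ A ∈ F \ L, 2 ≤ (children F A).card := fun A hA => by
    simp only [L, Finset.mem_sdiff, Finset.mem_filter, not_and] at hA
    have := Finset.card_pos.2 (hH.1 A hA.1).2
    exact hH.two_le_card_children hA.1 (by have := hA.2 hA.1; omega)
  have hleaves : ∑ A ∈ L, (children F A).card = 0 :=
    Finset.sum_eq_zero fun A hA => by
      rw [hH.children_eq_empty_of_card_le_one (Finset.mem_filter.1 hA).2.le, Finset.card_empty]
  have hsum : ∑ A ∈ F \ L, 2 = ∑ A ∈ F \ L, (children F A).card := by
    have := Finset.sum_sdiff hLF (f := fun A => (children F A).card)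
    rw [hleaves, add_zero, hH.sum_card_children, hF.2] at this
    rw [this, Finset.sum_const, hcard, smul_eq_mul]
    omega
  have hIL : I ∈ F \ L :=
    Finset.mem_sdiff.2 ⟨hI, fun h => by rw [(Finset.mem_filter.1 h).2] at h2; omega⟩
  exact ((Finset.sum_eq_sum_iff_of_le hle).1 hsum I hIL).symm

lemma exists_children_eq_pair (hF : Nondeg S F) {I : Finset α} (hI : I ∈ F) (h2 : 2 ≤ I.card) :
    ∃ C₁ C₂, children F I = {C₁, C₂} ∧ Disjoint C₁ C₂ := by
  obtain ⟨C₁, C₂, hne, hch⟩ := Finset.card_eq_two.1 (hF.card_children hI h2)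
  refine ⟨C₁, C₂, hch, hF.1.disjoint_of_mem_children (K := I) ?_ ?_ hne⟩ <;> simp [hch]

lemma induction_on (hF : Nondeg S F) {P : Finset α → Prop}
    (leaf : ∀ K ∈ F, K.card = 1 → P K)
    (node : ∀ K ∈ F, ∀ C₁ C₂, children F K = {C₁, C₂} → Disjoint C₁ C₂ → P C₁ → P C₂ → P K) :
    ∀ K ∈ F, P K := by
  intro K
  induction K using Finset.strongInduction with
  | H K ih =>
    intro hK
    have hpos := Finset.card_pos.2 (hF.1.1 K hK).2
    by_cases h1 : K.card = 1
    · exact leaf K hK h1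
    obtain ⟨C₁, C₂, hch, hdisj⟩ := hF.exists_children_eq_pair hK (by omega)
    have hC₁ := mem_children.1 (by simp [hch] : C₁ ∈ children F K)
    have hC₂ := mem_children.1 (by simp [hch] : C₂ ∈ children F K)
    exact node K hK C₁ C₂ hch hdisj (ih C₁ hC₁.2.2.1 hC₁.1) (ih C₂ hC₂.2.2.1 hC₂.1)

lemma sum_le_of_le_card_mul_card (hF : Nondeg S F) (w : Finset α → ℚ)
    (leaf : ∀ K ∈ F, K.card = 1 → w K ≤ 0)
    (node : ∀ K ∈ F, ∀ C₁ C₂, children F K = {C₁, C₂} → w K ≤ C₁.card * C₂.card - 1) :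
    ∑ I ∈ F, w I ≤ ((S.card : ℚ) - 1) * (S.card - 2) / 2 := by
  have key : ∀ K ∈ F, ∑ I ∈ F.filter (· ⊆ K), w I ≤ ((K.card : ℚ) - 1) * (K.card - 2) / 2 := by
    refine hF.induction_on (fun K hK h1 => ?_) fun K hK C₁ C₂ hch hdisj ih₁ ih₂ => ?_
    · rw [hF.1.filter_subset_eq_singleton hK h1, Finset.sum_singleton, h1]
      norm_num
      exact leaf K hK h1
    · have hcard : K.card = C₁.card + C₂.card := by
        rw [← hF.1.union_eq_of_children_eq_pair hK hch, Finset.card_union_of_disjoint hdisj]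
      rw [hF.1.sum_filter_subset_of_children_eq_pair hK hch hdisj, hcard]
      have hnode := node K hK C₁ C₂ hch
      push_cast
      linarith
  have hFS : F.filter (· ⊆ S) = F := Finset.filter_true_of_mem fun I hI => (hF.1.1 I hI).1
  simpa only [hFS] using key S hF.1.2.2.1

lemma card_filter_splits_le (hF : Nondeg S F) (A : Finset α) :
    (F.filter (Splits F · A)).card ≤ A.card - 1 := by
  have key : ∀ K ∈ F,
      ∑ J ∈ F.filter (· ⊆ K), (if Splits F J A then 1 else 0) ≤ (A ∩ K).card - 1 := by
    refine hF.induction_on (fun K hK h1 => ?_) fun K hK C₁ C₂ hch hdisj ih₁ ih₂ => ?_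
    · have : ¬ Splits F K A := fun ⟨D, hD, _⟩ => by
        simp [hF.1.children_eq_empty_of_card_le_one h1.le] at hD
      rw [hF.1.filter_subset_eq_singleton hK h1, Finset.sum_singleton, if_neg this]
      exact Nat.zero_le _
    · have hunion := hF.1.union_eq_of_children_eq_pair hK hch
      have hcard : (A ∩ K).card = (A ∩ C₁).card + (A ∩ C₂).card := by
        rw [← hunion, Finset.inter_union_distrib_left,
          Finset.card_union_of_disjoint
            (hdisj.mono Finset.inter_subset_right Finset.inter_subset_right)]
      rw [hF.1.sum_filter_subset_of_children_eq_pair hK hch hdisj, hcard]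
      split_ifs with hs
      · obtain ⟨h₁, h₂⟩ := hs.inter_nonempty hch hdisj hunion
        have := Finset.card_pos.2 h₁
        have := Finset.card_pos.2 h₂
        omega
      · omega
  have hFS : F.filter (· ⊆ S) = F := Finset.filter_true_of_mem fun J hJ => (hF.1.1 J hJ).1
  have := key S hF.1.2.2.1
  rw [hFS, ← Finset.card_filter] at this
  exact this.trans (Nat.sub_le_sub_right (Finset.card_le_card Finset.inter_subset_left) 1)

end Nondeg

lemma eta_le_card_filter_splits (F G : Finset (Finset α)) (I J : Finset α) :
    eta F G I J ≤ ((children F I).filter (Splits G J)).card := by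
  refine (Finset.card_le_card fun A hA => ?_).trans (Finset.card_image_le (f := (· ∩ J)))
  simp only [restrictFam, Finset.mem_filter, Finset.mem_image] at hA
  obtain ⟨⟨⟨C, hC, rfl⟩, -⟩, _, ⟨⟨D, hD, rfl⟩, -⟩, hcross⟩ := hA
  refine Finset.mem_image.2 ⟨C, Finset.mem_filter.2 ⟨hC, D, hD, ?_, ?_⟩, rfl⟩
  · obtain ⟨x, hx⟩ := inter_nonempty_of_not_compatible hcross
    simp only [Finset.mem_inter] at hx
    exact ⟨x, Finset.mem_inter.2 ⟨hx.1.1, hx.2.1⟩⟩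
  · have hCI := (mem_children.1 hC).2.2.1.subset
    obtain ⟨y, hy, hyD⟩ := Finset.not_subset.1 fun h => hcross (Or.inr (Or.inl h))
    simp only [Finset.mem_inter] at hy hyD
    exact ⟨y, Finset.mem_inter.2 ⟨hy.1, Finset.mem_sdiff.2 ⟨hy.2, fun h => hyD ⟨h, hCI hy.1⟩⟩⟩⟩

lemma one_le_eta {F G : Finset (Finset α)} {I J C D : Finset α} (hC : C ∈ children F I)
    (hD : D ∈ children G J) (h : ¬ Compatible (C ∩ J) (D ∩ I)) : 1 ≤ eta F G I J := by
  have hne := inter_nonempty_of_not_compatible h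
  refine Finset.card_pos.2 ⟨C ∩ J, Finset.mem_filter.2 ⟨?_, D ∩ I, ?_, h⟩⟩
  · exact Finset.mem_filter.2 ⟨Finset.mem_image_of_mem _ hC, hne.mono Finset.inter_subset_left⟩
  · exact Finset.mem_filter.2 ⟨Finset.mem_image_of_mem _ hD, hne.mono Finset.inter_subset_right⟩

lemma theta_mono : Monotone theta := fun x y h => by
  unfold theta
  gcongr

lemma theta_nonneg (x : ℕ) : 0 ≤ theta x := by
  unfold theta
  positivity

lemma one_le_theta {x : ℕ} (hx : 1 ≤ x) : 1 ≤ theta x := by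
  simpa [theta] using theta_mono hx

lemma theta_boole_add_boole (p q : Prop) [Decidable p] [Decidable q] :
    theta ((if p then 1 else 0) + (if q then 1 else 0)) =
      (if p then 1 else 0) + (if q then 1 else 0) + (if p ∧ q then 1 else 0) := by
  unfold theta
  by_cases hp : p <;> by_cases hq : q <;> norm_num [hp, hq]

lemma card_filter_splits_le_of_children_eq_pair {F G : Finset (Finset α)} {I J C₁ C₂ : Finset α}
    (hch : children F I = {C₁, C₂}) :
    ((children F I).filter (Splits G J)).card ≤
      (if Splits G J C₁ then 1 else 0) + (if Splits G J C₂ then 1 else 0) := by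
  rw [hch, Finset.filter_insert, Finset.filter_singleton]
  split_ifs <;> simp [Finset.card_le_two]

lemma sum_theta_eta_le_card_mul_card {S T : Finset α} {F G : Finset (Finset α)}
    (hF : IsHierarchy S F) (hG : Nondeg T G) {I C₁ C₂ : Finset α} (hch : children F I = {C₁, C₂}) :
    ∑ J ∈ G, theta (eta F G I J) ≤ C₁.card * C₂.card - 1 := by
  have hC₁ := Finset.card_pos.2 (hF.1 C₁ (mem_children.1 (by simp [hch] : C₁ ∈ children F I)).1).2
  have hC₂ := Finset.card_pos.2 (hF.1 C₂ (mem_children.1 (by simp [hch] : C₂ ∈ children F I)).1).2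
  have hX := hG.card_filter_splits_le C₁
  have hY := hG.card_filter_splits_le C₂
  set X := G.filter (Splits G · C₁)
  set Y := G.filter (Splits G · C₂)
  set Z := G.filter fun J => Splits G J C₁ ∧ Splits G J C₂
  replace hX : X.card + 1 ≤ C₁.card := by omega
  replace hY : Y.card + 1 ≤ C₂.card := by omega
  have hZ : Z.card ≤ X.card * Y.card := by
    have hZX : Z.card ≤ X.card :=
      Finset.card_le_card (Finset.monotone_filter_right _ fun _ _ h => h.1)
    have hZY : Z.card ≤ Y.card :=
      Finset.card_le_card (Finset.monotone_filter_right _ fun _ _ h => h.2)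
    rcases Nat.eq_zero_or_pos Y.card with h | h
    · omega
    · exact hZX.trans (Nat.le_mul_of_pos_right _ h)
  have hcount : X.card + Y.card + Z.card + 1 ≤ C₁.card * C₂.card := by
    nlinarith [Nat.mul_le_mul hX hY]
  calc ∑ J ∈ G, theta (eta F G I J)
      ≤ ∑ J ∈ G, ((if Splits G J C₁ then 1 else 0) + (if Splits G J C₂ then 1 else 0) +
          (if Splits G J C₁ ∧ Splits G J C₂ then 1 else 0)) :=
        Finset.sum_le_sum fun J _ => by
          rw [← theta_boole_add_boole]
          exact theta_mono ((eta_le_card_filter_splits F G I J).trans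
            (card_filter_splits_le_of_children_eq_pair hch))
    _ = X.card + Y.card + Z.card := by simp only [Finset.sum_add_distrib, Finset.sum_boole]; rfl
    _ ≤ C₁.card * C₂.card - 1 := by
        have := (Nat.cast_le (α := ℚ)).2 hcount
        push_cast at this
        linarith

lemma dNav_le {S : Finset α} {F G : Finset (Finset α)} (hF : Nondeg S F) (hG : Nondeg S G) :
    dNav F G ≤ ((S.card : ℚ) - 1) * (S.card - 2) / 2 := by
  refine hF.sum_le_of_le_card_mul_card _ (fun K _ h1 => ?_) fun K _ C₁ C₂ hch =>
    sum_theta_eta_le_card_mul_card hF.1 hG hch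
  refine (Finset.sum_eq_zero fun J _ => ?_).le
  have := eta_le_card_filter_splits F G K J
  rw [hF.1.children_eq_empty_of_card_le_one h1.le, Finset.filter_empty, Finset.card_empty,
    Nat.le_zero] at this
  simp [this, theta]

lemma sum_theta_eta_le_dNav {F G : Finset (Finset α)} {ι : Type*} {P : Finset ι}
    {φ : ι → Finset α × Finset α} (hφ : Set.InjOn φ P)
    (hmem : ∀ p ∈ P, (φ p).1 ∈ F ∧ (φ p).2 ∈ G) :
    ∑ p ∈ P, theta (eta F G (φ p).1 (φ p).2) ≤ dNav F G := by
  have hsub : P.image φ ⊆ F ×ˢ G := by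
    simp only [Finset.subset_iff, Finset.mem_image, Finset.mem_product]
    rintro _ ⟨p, hp, rfl⟩
    exact hmem p hp
  calc ∑ p ∈ P, theta (eta F G (φ p).1 (φ p).2)
      = ∑ x ∈ P.image φ, theta (eta F G x.1 x.2) := by rw [Finset.sum_image hφ]
    _ ≤ ∑ x ∈ F ×ˢ G, theta (eta F G x.1 x.2) :=
        Finset.sum_le_sum_of_subset_of_nonneg hsub fun _ _ _ => theta_nonneg _
    _ = dNav F G := Finset.sum_product _ _ _

lemma card_sigma_range_range {n : ℕ} (hn : 1 ≤ n) :
    (((Finset.range (n - 1)).sigma Finset.range).card : ℚ) = ((n : ℚ) - 1) * (n - 2) / 2 := by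
  rw [Finset.card_sigma]
  simp only [Finset.card_range]
  obtain ⟨m, rfl⟩ : ∃ m, n = m + 1 := ⟨n - 1, by omega⟩
  have h := congrArg (Nat.cast (R := ℚ)) (Finset.sum_range_id_mul_two m)
  rcases m with _ | m
  · simp
  · simp only [Nat.add_sub_cancel] at h ⊢
    push_cast at h ⊢
    linarith

section Caterpillar

variable {n : ℕ} {c : Fin n → α}

def prefixCluster (c : Fin n → α) (k : ℕ) : Finset α :=
  (Finset.univ.filter fun i : Fin n => (i : ℕ) ≤ k).image c

-- `caterpillar (c ∘ Fin.rev)` is the caterpillar of the reversed enumeration; its non-singleton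
-- clusters are the suffixes `prefixCluster (c ∘ Fin.rev) b = {c (n - 1 - b), …, c (n - 1)}`.
def caterpillar (c : Fin n → α) : Finset (Finset α) :=
  (Finset.Ico 1 n).image (prefixCluster c) ∪ Finset.univ.image fun i => {c i}

lemma apply_mem_prefixCluster (hc : Function.Injective c) {k : ℕ} {i : Fin n} :
    c i ∈ prefixCluster c k ↔ (i : ℕ) ≤ k := by
  simp [prefixCluster, hc.eq_iff]

lemma prefixCluster_mono {j k : ℕ} (h : j ≤ k) : prefixCluster c j ⊆ prefixCluster c k :=
  Finset.image_subset_image (Finset.monotone_filter_right _ fun _ _ hi => hi.trans h)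

lemma prefixCluster_subset_prefixCluster_iff (hc : Function.Injective c) {j k : ℕ} (hj : j < n) :
    prefixCluster c j ⊆ prefixCluster c k ↔ j ≤ k :=
  ⟨fun h => (apply_mem_prefixCluster hc (i := ⟨j, hj⟩)).1
    (h ((apply_mem_prefixCluster hc).2 le_rfl)), prefixCluster_mono⟩

lemma prefixCluster_inj (hc : Function.Injective c) {j k : ℕ} (hj : j < n) (hk : k < n) :
    prefixCluster c j = prefixCluster c k ↔ j = k :=
  ⟨fun h => ((prefixCluster_subset_prefixCluster_iff hc hj).1 h.subset).antisymm
    ((prefixCluster_subset_prefixCluster_iff hc hk).1 h.symm.subset), congrArg _⟩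

lemma not_prefixCluster_subset_singleton (hc : Function.Injective c) {k : ℕ} (hk : 1 ≤ k)
    (hkn : k < n) (x : α) : ¬ prefixCluster c k ⊆ {x} := by
  intro h
  have h₀ := h ((apply_mem_prefixCluster hc (i := ⟨0, by omega⟩)).2 (Nat.zero_le k))
  have hₖ := h ((apply_mem_prefixCluster hc (i := ⟨k, hkn⟩)).2 le_rfl)
  rw [Finset.mem_singleton] at h₀ hₖ
  have := congrArg Fin.val (hc (h₀.trans hₖ.symm))
  simp only at this
  omega

lemma prefixCluster_mem_caterpillar {k : ℕ} (hk : 1 ≤ k) (hkn : k < n) :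
    prefixCluster c k ∈ caterpillar c :=
  Finset.mem_union_left _ (Finset.mem_image_of_mem _ (Finset.mem_Ico.2 ⟨hk, hkn⟩))

lemma caterpillar_isHierarchy (hc : Function.Injective c) (hn : 2 ≤ n) :
    IsHierarchy (Finset.univ.image c) (caterpillar c) := by
  have hmem : ∀ A ∈ caterpillar c,
      (∃ k, 1 ≤ k ∧ k < n ∧ prefixCluster c k = A) ∨ ∃ i, {c i} = A := by
    simp [caterpillar, and_assoc]
  refine ⟨fun A hA => ?_, fun A hA B hB => ?_, ?_, ?_⟩
  · rcases hmem A hA with ⟨k, -, hkn, rfl⟩ | ⟨i, rfl⟩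
    · exact ⟨Finset.image_subset_image (Finset.filter_subset _ _),
        c ⟨0, by omega⟩, (apply_mem_prefixCluster hc).2 (Nat.zero_le k)⟩
    · simp
  · rcases hmem A hA with ⟨j, -, -, rfl⟩ | ⟨i, rfl⟩
    · rcases hmem B hB with ⟨k, -, -, rfl⟩ | ⟨i, rfl⟩
      · rcases le_total j k with h | h
        exacts [Or.inr (Or.inl (prefixCluster_mono h)), Or.inr (Or.inr (prefixCluster_mono h))]
      · exact (compatible_singleton_left _ _).symm
    · exact compatible_singleton_left _ _
  · have : prefixCluster c (n - 1) = Finset.univ.image c := by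
      rw [prefixCluster, Finset.filter_true_of_mem fun i _ => by omega]
    exact this ▸ prefixCluster_mem_caterpillar (by omega) (by omega)
  · simp [caterpillar]

lemma card_caterpillar (hc : Function.Injective c) : (caterpillar c).card = 2 * n - 1 := by
  have hdisj : Disjoint ((Finset.Ico 1 n).image (prefixCluster c))
      (Finset.univ.image fun i => ({c i} : Finset α)) := by
    simp only [Finset.disjoint_left, Finset.mem_image, Finset.mem_Ico, Finset.mem_univ, true_and,
      not_exists]
    rintro _ ⟨k, ⟨hk, hkn⟩, rfl⟩ i h
    exact not_prefixCluster_subset_singleton hc hk hkn (c i) h.symm.subset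
  rw [caterpillar, Finset.card_union_of_disjoint hdisj,
    Finset.card_image_of_injOn fun j hj k hk =>
      (prefixCluster_inj hc (Finset.mem_Ico.1 hj).2 (Finset.mem_Ico.1 hk).2).1,
    Finset.card_image_of_injective (f := fun i => ({c i} : Finset α)) _
      (Finset.singleton_injective.comp hc), Nat.card_Ico,
    Finset.card_univ, Fintype.card_fin]
  omega

lemma caterpillar_nondeg (hc : Function.Injective c) (hn : 2 ≤ n) :
    Nondeg (Finset.univ.image c) (caterpillar c) := by
  refine ⟨caterpillar_isHierarchy hc hn, ?_⟩
  rw [card_caterpillar hc, Finset.card_image_of_injective _ hc, Finset.card_univ, Fintype.card_fin]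

lemma prefixCluster_mem_children (hc : Function.Injective c) {k : ℕ} (hk : 1 ≤ k)
    (hkn : k + 1 < n) : prefixCluster c k ∈ children (caterpillar c) (prefixCluster c (k + 1)) := by
  refine mem_children.2 ⟨prefixCluster_mem_caterpillar hk (by omega),
    prefixCluster_mem_caterpillar (by omega) hkn, ?_, fun Q hQ hkQ => ?_⟩
  · exact Finset.ssubset_iff_subset_ne.2 ⟨prefixCluster_mono (by omega), fun h =>
      absurd ((prefixCluster_subset_prefixCluster_iff hc hkn).1 h.symm.subset) (by omega)⟩
  simp only [caterpillar, Finset.mem_union, Finset.mem_image, Finset.mem_Ico, Finset.mem_univ,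
    true_and] at hQ
  rcases hQ with ⟨j, ⟨-, hjn⟩, rfl⟩ | ⟨i, rfl⟩
  · refine prefixCluster_mono (Nat.succ_le_of_lt (lt_of_not_ge fun hjk => hkQ.not_subset ?_))
    exact prefixCluster_mono hjk
  · exact absurd hkQ.subset (not_prefixCluster_subset_singleton hc hk (by omega) (c i))

lemma apply_mem_prefixCluster_comp_rev (hc : Function.Injective c) {k : ℕ} {i : Fin n} :
    c i ∈ prefixCluster (c ∘ Fin.rev) k ↔ n - 1 - i ≤ k := by
  have : c i = (c ∘ Fin.rev) i.rev := by simp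
  rw [this, apply_mem_prefixCluster (hc.comp Fin.rev_injective), Fin.val_rev]
  omega

lemma not_compatible_prefixCluster_comp_rev (hc : Function.Injective c) {j b : ℕ}
    (hj : j + 1 < n) (hb : b + 1 < n) (hjb : n ≤ j + b + 1) :
    ¬ Compatible (prefixCluster c j ∩ prefixCluster (c ∘ Fin.rev) (b + 1))
      (prefixCluster (c ∘ Fin.rev) b ∩ prefixCluster c (j + 1)) := by
  have mem {i : ℕ} (hi : i < n) (k : ℕ) : c ⟨i, hi⟩ ∈ prefixCluster c k ↔ i ≤ k :=
    apply_mem_prefixCluster hc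
  have memRev {i : ℕ} (hi : i < n) (k : ℕ) :
      c ⟨i, hi⟩ ∈ prefixCluster (c ∘ Fin.rev) k ↔ n - 1 - i ≤ k :=
    apply_mem_prefixCluster_comp_rev hc
  refine not_compatible_of_mem (x := c ⟨j, by omega⟩) (y := c ⟨n - 2 - b, by omega⟩)
    (z := c ⟨j + 1, hj⟩) ?_ ?_ ?_ ?_ ?_ ?_ <;>
  simp only [Finset.mem_inter, mem, memRev, not_and] <;> omega

lemma le_dNav_caterpillar (hc : Function.Injective c) (hn : 1 ≤ n) :
    ((n : ℚ) - 1) * (n - 2) / 2 ≤ dNav (caterpillar c) (caterpillar (c ∘ Fin.rev)) := by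
  -- `⟨j, t⟩` stands for the prefix `{c 0, …, c (j + 1)}` against the suffix `{c t, …, c (n - 1)}`.
  set P := (Finset.range (n - 1)).sigma fun j => Finset.range j
  have hP : ∀ p ∈ P, p.1 + 1 < n ∧ p.2 < p.1 := fun p hp => by
    simp only [P, Finset.mem_sigma, Finset.mem_range] at hp
    omega
  let φ : (Σ _ : ℕ, ℕ) → Finset α × Finset α := fun p =>
    (prefixCluster c (p.1 + 1), prefixCluster (c ∘ Fin.rev) (n - 2 - p.2 + 1))
  have hφ : Set.InjOn φ P := fun p hp q hq h => by
    obtain ⟨h₁, h₂⟩ := Prod.ext_iff.1 h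
    obtain ⟨hp₁, hp₂⟩ := hP p hp
    obtain ⟨hq₁, hq₂⟩ := hP q hq
    have e₁ := (prefixCluster_inj hc hp₁ hq₁).1 h₁
    have e₂ := (prefixCluster_inj (hc.comp Fin.rev_injective) (by omega) (by omega)).1 h₂
    exact Sigma.ext (by omega) (heq_of_eq (by omega))
  have hmem : ∀ p ∈ P, (φ p).1 ∈ caterpillar c ∧ (φ p).2 ∈ caterpillar (c ∘ Fin.rev) :=
    fun p hp => by
      obtain ⟨hp₁, hp₂⟩ := hP p hp
      exact ⟨prefixCluster_mem_caterpillar (by omega) hp₁,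
        prefixCluster_mem_caterpillar (by omega) (by omega)⟩
  calc ((n : ℚ) - 1) * (n - 2) / 2 = ∑ p ∈ P, 1 := by
        rw [Finset.sum_const, nsmul_one, card_sigma_range_range hn]
    _ ≤ ∑ p ∈ P, theta (eta (caterpillar c) (caterpillar (c ∘ Fin.rev)) (φ p).1 (φ p).2) :=
        Finset.sum_le_sum fun p hp => by
          obtain ⟨hp₁, hp₂⟩ := hP p hp
          exact one_le_theta (one_le_eta (prefixCluster_mem_children hc (by omega) hp₁)
            (prefixCluster_mem_children (hc.comp Fin.rev_injective) (by omega) (by omega))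
            (not_compatible_prefixCluster_comp_rev hc (by omega) (by omega) (by omega)))
    _ ≤ dNav (caterpillar c) (caterpillar (c ∘ Fin.rev)) := sum_theta_eta_le_dNav hφ hmem

end Caterpillar

lemma exists_injective_image_univ_eq (S : Finset α) :
    ∃ c : Fin S.card → α, Function.Injective c ∧ Finset.univ.image c = S := by
  refine ⟨Subtype.val ∘ S.equivFin.symm, Subtype.val_injective.comp S.equivFin.symm.injective, ?_⟩
  rw [← Finset.image_image, Finset.image_univ_equiv, Finset.univ_eq_attach,
    Finset.attach_image_val]

theorem dNav_diameter (S : Finset α) (hn : 2 ≤ S.card) :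
    (∀ F G : Finset (Finset α), Nondeg S F → Nondeg S G →
      dNav F G ≤ (1 / 2) * ((S.card : ℚ) - 1) * ((S.card : ℚ) - 2)) ∧
    (∃ F G : Finset (Finset α), Nondeg S F ∧ Nondeg S G ∧
      dNav F G = (1 / 2) * ((S.card : ℚ) - 1) * ((S.card : ℚ) - 2)) := by
  have hbound : (1 / 2) * ((S.card : ℚ) - 1) * ((S.card : ℚ) - 2) =
      ((S.card : ℚ) - 1) * (S.card - 2) / 2 := by ring
  obtain ⟨c, hc, hcS⟩ := exists_injective_image_univ_eq S
  have hF : Nondeg S (caterpillar c) := by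
    have := caterpillar_nondeg hc hn
    rwa [hcS] at this
  have hG : Nondeg S (caterpillar (c ∘ Fin.rev)) := by
    have := caterpillar_nondeg (hc.comp Fin.rev_injective) hn
    rwa [← Finset.image_image, Finset.image_univ_of_surjective Fin.rev_surjective, hcS] at this
  rw [hbound]
  refine ⟨fun F G hF hG => dNav_le hF hG, _, _, hF, hG, ?_⟩
  exact (dNav_le hF hG).antisymm (le_dNav_caterpillar hc (by omega))

end TreeDist
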